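/- arXiv:1905.06233 — 2 statements merged into one kernel-verified Lean document; each statement's English description precedes it below -/
import Mathlib

section
/- Every rewrite step of the system R∖@ on extended as-patterns preserves ground semantics: if p rewrites in one step to p' with respect to R∖@, then ⟦p⟧ = ⟦p'⟧. -/
/-- A constructor signature: a type of constructor symbols with arities. -/
structure Sig where
  C : Type
  ar : C → ℕ

/-- Values: ground constructor terms over the signature `S`. -/
inductive Val (S : Sig) : Type where
  | mk : (c : S.C) → (Fin (S.ar c) → Val S) → Val S

/-- Extended as-patterns: variables, constructor applications, sums,
complements, `⊥` and aliases `q @ p`. -/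
inductive Pat (S : Sig) : Type where
  | var : ℕ → Pat S
  | cons : (c : S.C) → (Fin (S.ar c) → Pat S) → Pat S
  | plus : Pat S → Pat S → Pat S
  | minus : Pat S → Pat S → Pat S
  | bot : Pat S
  | atp : Pat S → Pat S → Pat S

namespace Pat

variable {S : Sig}

/-- Variables occurring in a pattern. -/
def vars : Pat S → Set ℕ
  | var x => {x}
  | cons _ ps => ⋃ i, vars (ps i)
  | plus p q => vars p ∪ vars q
  | minus p q => vars p ∪ vars q
  | bot => ∅
  | atp q p => vars q ∪ vars p

/-- Linearity of extended as-patterns. -/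
inductive Linear : Pat S → Prop where
  | var (x : ℕ) : Linear (var x)
  | cons (c : S.C) (ps : Fin (S.ar c) → Pat S) :
      (∀ i, Linear (ps i)) →
      (∀ i j, i ≠ j → Disjoint (vars (ps i)) (vars (ps j))) →
      Linear (cons c ps)
  | plus {p q : Pat S} : Linear p → Linear q → Linear (plus p q)
  | minus {p q : Pat S} : Linear p → Linear q → Disjoint (vars p) (vars q) →
      Linear (minus p q)
  | bot : Linear bot
  | atp {q p : Pat S} : Linear q → Linear p → Disjoint (vars q) (vars p) →
      Linear (atp q p)

/-- Ground semantics of extended as-patterns. -/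
def sem : Pat S → Set (Val S)
  | var _ => Set.univ
  | cons c ps => {v | ∃ vs : Fin (S.ar c) → Val S, v = Val.mk c vs ∧ ∀ i, vs i ∈ sem (ps i)}
  | plus p q => sem p ∪ sem q
  | minus p q => sem p \ sem q
  | bot => ∅
  | atp q p => sem q ∩ sem p

/-- The extended instance relation: `Matches p v` means pattern `p` matches `v`. -/
def Matches : Pat S → Val S → Prop
  | var _, _ => True
  | cons c ps, v => ∃ vs : Fin (S.ar c) → Val S, v = Val.mk c vs ∧ ∀ i, Matches (ps i) (vs i)
  | plus p q, v => Matches p v ∨ Matches q v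
  | minus p q, v => Matches p v ∧ ¬ Matches q v
  | bot, _ => False
  | atp q p, v => Matches q v ∧ Matches p v

/-- Additive patterns: patterns containing no complement `∖`. -/
inductive Additive : Pat S → Prop where
  | var (x : ℕ) : Additive (var x)
  | cons (c : S.C) (ps : Fin (S.ar c) → Pat S) :
      (∀ i, Additive (ps i)) → Additive (cons c ps)
  | plus {p q : Pat S} : Additive p → Additive q → Additive (plus p q)
  | bot : Additive bot
  | atp {q p : Pat S} : Additive q → Additive p → Additive (atp q p)

/-- Patterns containing no `⊥`. A pattern is *pure additive* if it is
`Additive` and `BotFree`. -/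
inductive BotFree : Pat S → Prop where
  | var (x : ℕ) : BotFree (var x)
  | cons (c : S.C) (ps : Fin (S.ar c) → Pat S) :
      (∀ i, BotFree (ps i)) → BotFree (cons c ps)
  | plus {p q : Pat S} : BotFree p → BotFree q → BotFree (plus p q)
  | minus {p q : Pat S} : BotFree p → BotFree q → BotFree (minus p q)
  | atp {q p : Pat S} : BotFree q → BotFree p → BotFree (atp q p)

/-- The sum `p₁ + ⋯ + pₙ` of a list of patterns (`⊥` for the empty list). -/
def sumList : List (Pat S) → Pat S
  | [] => bot
  | [p] => p
  | p :: q :: r => plus p (sumList (q :: r))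

variable [Fintype S.C]

/-- The sum `Σ_{c ∈ C} c(z₁,…,z_m) ∖ g(t₁,…,tₙ)`, where the fresh variables
are given by `z i = fv i`. -/
noncomputable def sumVM (fv : ℕ → ℕ) (g : S.C) (ts : Fin (S.ar g) → Pat S) : Pat S :=
  sumList ((Finset.univ : Finset S.C).toList.map fun c =>
    minus (cons c fun i => var (fv i)) (cons g ts))

/-- One step of the rewriting system `R∖@` of Figure 3 (closed under contexts).
`fv` enumerates the fresh variables used by rule (M6'). -/
inductive Step (fv : ℕ → ℕ) : Pat S → Pat S → Prop where
  | addL {v : Pat S} : Additive v → Step fv (plus bot v) v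
  | addR {v : Pat S} : Additive v → Step fv (plus v bot) v
  | empty {c : S.C} {ps : Fin (S.ar c) → Pat S} (i : Fin (S.ar c)) :
      (∀ j, Additive (ps j)) → ps i = bot → Step fv (cons c ps) bot
  | emptyA {x : ℕ} : Step fv (atp (var x) bot) bot
  | dist {c : S.C} {ps : Fin (S.ar c) → Pat S} (i : Fin (S.ar c)) {u w : Pat S} :
      (∀ j, Additive (ps j)) → ps i = plus u w →
      Step fv (cons c ps)
        (plus (cons c (Function.update ps i u)) (cons c (Function.update ps i w)))
  | distAt {x : ℕ} {v1 v2 : Pat S} : Additive v1 → Additive v2 →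
      Step fv (atp (var x) (plus v1 v2)) (plus (atp (var x) v1) (atp (var x) v2))
  | minusMV {v : Pat S} {x : ℕ} : Additive v → Step fv (minus v (var x)) bot
  | minusMB {v : Pat S} : Additive v → Step fv (minus v bot) v
  | minusMP {w v1 v2 : Pat S} : Additive w → Additive v1 → Additive v2 →
      Step fv (minus w (plus v1 v2)) (minus (minus w v1) v2)
  | minusVM {x : ℕ} {g : S.C} {ts : Fin (S.ar g) → Pat S} :
      (∀ j, Additive (ts j)) → (∀ j, BotFree (ts j)) →
      Step fv (minus (var x) (cons g ts)) (atp (var x) (sumVM fv g ts))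
  | minusBM {g : S.C} {vs : Fin (S.ar g) → Pat S} :
      (∀ j, Additive (vs j)) → Step fv (minus bot (cons g vs)) bot
  | minusPM {v w : Pat S} {g : S.C} {vs : Fin (S.ar g) → Pat S} :
      Additive v → Additive w → (∀ j, Additive (vs j)) →
      Step fv (minus (plus v w) (cons g vs))
        (plus (minus v (cons g vs)) (minus w (cons g vs)))
  | minusFF {f : S.C} {vs ts : Fin (S.ar f) → Pat S} :
      (∀ j, Additive (vs j)) → (∀ j, Additive (ts j)) → (∀ j, BotFree (ts j)) →
      Step fv (minus (cons f vs) (cons f ts))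
        (sumList (List.ofFn fun i => cons f (Function.update vs i (minus (vs i) (ts i)))))
  | minusFG {f g : S.C} {vs : Fin (S.ar f) → Pat S} {ws : Fin (S.ar g) → Pat S} :
      f ≠ g → (∀ j, Additive (vs j)) → (∀ j, Additive (ws j)) →
      Step fv (minus (cons f vs) (cons g ws)) (cons f vs)
  | minusAM {x : ℕ} {v w : Pat S} : Additive v → Additive w →
      Step fv (minus (atp (var x) v) w) (atp (var x) (minus v w))
  | minusMA {x : ℕ} {v w : Pat S} : Additive v → Additive w →
      Step fv (minus v (atp (var x) w)) (minus v w)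
  | congCons {c : S.C} {ps : Fin (S.ar c) → Pat S} (i : Fin (S.ar c)) {p' : Pat S} :
      Step fv (ps i) p' → Step fv (cons c ps) (cons c (Function.update ps i p'))
  | congPlusL {p p' q : Pat S} : Step fv p p' → Step fv (plus p q) (plus p' q)
  | congPlusR {p q q' : Pat S} : Step fv q q' → Step fv (plus p q) (plus p q')
  | congMinusL {p p' q : Pat S} : Step fv p p' → Step fv (minus p q) (minus p' q)
  | congMinusR {p q q' : Pat S} : Step fv q q' → Step fv (minus p q) (minus p q')
  | congAliasL {q q' p : Pat S} : Step fv q q' → Step fv (atp q p) (atp q' p)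
  | congAliasR {q p p' : Pat S} : Step fv p p' → Step fv (atp q p) (atp q p')

/-- Patterns containing no sum `+`. -/
inductive PlusFree : Pat S → Prop where
  | var (x : ℕ) : PlusFree (var x)
  | cons (c : S.C) (ps : Fin (S.ar c) → Pat S) :
      (∀ i, PlusFree (ps i)) → PlusFree (cons c ps)
  | minus {p q : Pat S} : PlusFree p → PlusFree q → PlusFree (minus p q)
  | bot : PlusFree bot
  | atp {q p : Pat S} : PlusFree q → PlusFree p → PlusFree (atp q p)

/-- Terms in which every `+` symbol has only `+` symbols above it:
sums are pushed to the top. -/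
inductive TopPlus : Pat S → Prop where
  | leaf {p : Pat S} : PlusFree p → TopPlus p
  | plus {p q : Pat S} : TopPlus p → TopPlus q → TopPlus (plus p q)

/-- `q` is a normal form of `p` w.r.t. the relation `R`. -/
def NormalFormOf (R : Pat S → Pat S → Prop) (p q : Pat S) : Prop :=
  Relation.ReflTransGen R p q ∧ ¬ ∃ r, R q r

end Pat

/-!
Since `Val.mk c` is injective, `⟦c(p₁,…,pₙ)⟧` is a copy of the product `⟦p₁⟧ × ⋯ × ⟦pₙ⟧`,
so every rule of `R∖@` is an identity of sets: products distribute over a union in one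
coordinate, `∏ Aᵢ ∖ ∏ Bᵢ = ⋃ᵢ A₁ × ⋯ × (Aᵢ ∖ Bᵢ) × ⋯ × Aₙ`, products with different head
constructors are disjoint, and rule (M6') holds because every value is headed by some constructor.
Closure under contexts is immediate because the semantics is compositional.
-/

open Set Function

theorem Set.univ_pi_update_union {ι : Type*} {α : ι → Type*} [DecidableEq ι]
    (s : ∀ i, Set (α i)) (i : ι) (a b : Set (α i)) :
    pi univ (update s i (a ∪ b)) = pi univ (update s i a) ∪ pi univ (update s i b) := by
  simp only [univ_pi_update i s _ fun _ t => t, ← union_inter_distrib_right]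
  rfl

theorem Set.univ_pi_sdiff_univ_pi {ι : Type*} {α : ι → Type*} [DecidableEq ι]
    (s t : ∀ i, Set (α i)) :
    pi univ s \ pi univ t = ⋃ i, pi univ (update s i (s i \ t i)) := by
  ext x
  simp only [univ_pi_update _ s _ fun _ t => t, mem_sdiff, mem_iUnion, mem_inter_iff,
    mem_ofPred_eq, mem_pi, mem_compl_iff, mem_singleton_iff, mem_univ, forall_const, not_forall]
  constructor
  · rintro ⟨hs, i, hi⟩
    exact ⟨i, ⟨hs i, hi⟩, fun j _ => hs j⟩
  · rintro ⟨i, ⟨hsi, hti⟩, hs⟩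
    refine ⟨fun j => ?_, i, hti⟩
    by_cases h : j = i
    · exact h ▸ hsi
    · exact hs j h

theorem Val.mk_injective {S : Sig} (c : S.C) : Injective (Val.mk c) :=
  fun _ _ h => by injection h

theorem Val.iUnion_range_mk {S : Sig} : ⋃ c, range (Val.mk (S := S) c) = univ :=
  eq_univ_of_forall fun ⟨c, vs⟩ => mem_iUnion.2 ⟨c, vs, rfl⟩

namespace Pat

variable {S : Sig}

@[simp] theorem sem_var (x : ℕ) : (var x : Pat S).sem = univ := rfl
@[simp] theorem sem_plus (p q : Pat S) : (plus p q).sem = p.sem ∪ q.sem := rfl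
@[simp] theorem sem_minus (p q : Pat S) : (minus p q).sem = p.sem \ q.sem := rfl
@[simp] theorem sem_bot : (bot : Pat S).sem = ∅ := rfl
@[simp] theorem sem_atp (q p : Pat S) : (atp q p).sem = q.sem ∩ p.sem := rfl

theorem sem_cons (c : S.C) (ps : Fin (S.ar c) → Pat S) :
    (cons c ps).sem = Val.mk c '' pi univ (sem ∘ ps) := by
  ext v
  constructor
  · rintro ⟨vs, rfl, h⟩
    exact ⟨vs, fun i _ => h i, rfl⟩
  · rintro ⟨vs, h, rfl⟩
    exact ⟨vs, rfl, fun i => h i trivial⟩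

theorem sem_cons_update (c : S.C) (ps : Fin (S.ar c) → Pat S) (i : Fin (S.ar c)) (q : Pat S) :
    (cons c (update ps i q)).sem = Val.mk c '' pi univ (update (sem ∘ ps) i q.sem) := by
  rw [sem_cons, comp_update]

theorem sem_cons_of_eq_bot {c : S.C} {ps : Fin (S.ar c) → Pat S} {i : Fin (S.ar c)}
    (hi : ps i = bot) : (cons c ps).sem = ∅ := by
  rw [sem_cons, univ_pi_eq_empty (i := i) (by simp [hi]), image_empty]

theorem sem_cons_update_plus (c : S.C) (ps : Fin (S.ar c) → Pat S) (i : Fin (S.ar c))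
    (u w : Pat S) :
    (cons c (update ps i (plus u w))).sem
      = (cons c (update ps i u)).sem ∪ (cons c (update ps i w)).sem := by
  simp only [sem_cons_update, sem_plus, univ_pi_update_union, image_union]

theorem sem_cons_sdiff_cons_self (c : S.C) (vs ts : Fin (S.ar c) → Pat S) :
    (cons c vs).sem \ (cons c ts).sem
      = ⋃ i, (cons c (update vs i (minus (vs i) (ts i)))).sem := by
  simp only [sem_cons_update, sem_minus]
  rw [sem_cons, sem_cons, ← image_sdiff (Val.mk_injective c), univ_pi_sdiff_univ_pi, image_iUnion]
  rfl

theorem disjoint_sem_cons {f g : S.C} (hfg : f ≠ g) (vs : Fin (S.ar f) → Pat S)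
    (ws : Fin (S.ar g) → Pat S) : Disjoint (cons f vs).sem (cons g ws).sem := by
  rw [Set.disjoint_left]
  rintro _ ⟨_, rfl, _⟩ ⟨_, h, _⟩
  exact hfg (Val.mk.inj h).1

theorem sem_cons_var (c : S.C) (xs : Fin (S.ar c) → ℕ) :
    (cons c fun i => var (xs i)).sem = range (Val.mk c) := by
  simp [sem_cons, comp_def]

theorem sem_sumList (L : List (Pat S)) : (sumList L).sem = ⋃ p ∈ L, p.sem := by
  induction L using sumList.induct with
  | case1 => simp [sumList]
  | case2 p => simp [sumList]
  | case3 p q r ih => simp [sumList, ih]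

theorem sem_sumVM [Fintype S.C] (fv : ℕ → ℕ) (g : S.C) (ts : Fin (S.ar g) → Pat S) :
    (sumVM fv g ts).sem = (cons g ts).semᶜ := by
  simp [sumVM, sem_sumList, sem_cons_var, ← iUnion_sdiff, Val.iUnion_range_mk, compl_eq_univ_sdiff]

theorem Step.sem_eq [Fintype S.C] {fv : ℕ → ℕ} {p p' : Pat S} (h : Step fv p p') :
    p.sem = p'.sem := by
  induction h with
  | addL | addR | emptyA | minusMV | minusMB | minusBM | minusAM | minusMA => simp
  | empty _ _ hi => exact sem_cons_of_eq_bot hi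
  | dist i _ hi => rw [sem_plus, ← sem_cons_update_plus, ← hi, update_eq_self]
  | distAt => exact inter_union_distrib_left ..
  | minusMP => exact (Set.sdiff_sdiff ..).symm
  | minusPM => exact union_sdiff_distrib
  | minusVM => simp [sem_sumVM, compl_eq_univ_sdiff]
  | minusFF => simp [sem_sumList, sem_cons_sdiff_cons_self]
  | minusFG hfg => exact (disjoint_sem_cons hfg _ _).sdiff_eq_left
  | congCons i _ ih => rw [sem_cons_update, ← ih, ← sem_cons_update, update_eq_self]
  | congPlusL _ ih | congPlusR _ ih | congMinusL _ ih | congMinusR _ ih | congAliasL _ ih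
  | congAliasR _ ih => simp only [sem, ih]

end Pat

theorem stmt11_general (S : Sig) [Fintype S.C] (fv : ℕ → ℕ)
    (p p' : Pat S) (hstep : Pat.Step fv p p') :
    p.sem = p'.sem := hstep.sem_eq

/-- Complement semantics preservation for `R∖@`:
every rewrite step of `R∖@` preserves ground semantics. -/
theorem stmt11 (S : Sig) [Fintype S.C] (fv : ℕ → ℕ) (hfv : Function.Injective fv)
    (p p' : Pat S) (hlin : p.Linear) (hstep : Pat.Step fv p p') :
    p.sem = p'.sem :=
  stmt11_general S fv p p' hstep
end

section
/- The alias (as-pattern) elimination preserves the one-step rewrite relation: for any list L of rules whose left-hand sides use only (potentially aliased) constructor patterns, and any ground term t, t rewrites in one step with respect to L to t' if and only if t rewrites in one step with respect to TRat(L) to t', where TRat recursively rewrites each rule φ(p[x@q]ω) → r (with q alias-free) into φ(p[q]ω) → {x ↦ q}r until the left-hand side contains no alias symbol. -/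
open scoped Classical

namespace Pat

variable {S : Sig}

/-- The matchable variables of an extended as-pattern. -/
def mvar : Pat S → Set ℕ
  | var x => {x}
  | cons _ ps => ⋃ i, mvar (ps i)
  | plus p q => mvar p ∩ mvar q
  | minus p _ => mvar p
  | bot => Set.univ
  | atp q p => mvar q ∪ mvar p

/-- Applying a substitution on the (restricted) domain `D` to a pattern. -/
noncomputable def substOn (D : Set ℕ) (σ : ℕ → Pat S) : Pat S → Pat S
  | var x => if x ∈ D then σ x else var x
  | cons c ps => cons c fun i => substOn D σ (ps i)
  | plus p q => plus (substOn D σ p) (substOn D σ q)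
  | minus p q => minus (substOn D σ p) (substOn D σ q)
  | bot => bot
  | atp q p => atp (substOn D σ q) (substOn D σ p)

/-- The summands of a pattern: `summands (p₁ + ⋯ + pₙ) = [p₁,…,pₙ]`. -/
def summands : Pat S → List (Pat S)
  | plus p q => summands p ++ summands q
  | p => [p]

/-- Patterns containing no alias symbol `@`. -/
inductive AliasFree : Pat S → Prop where
  | var (x : ℕ) : AliasFree (var x)
  | cons (c : S.C) (ps : Fin (S.ar c) → Pat S) :
      (∀ i, AliasFree (ps i)) → AliasFree (cons c ps)
  | plus {p q : Pat S} : AliasFree p → AliasFree q → AliasFree (plus p q)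
  | minus {p q : Pat S} : AliasFree p → AliasFree q → AliasFree (minus p q)
  | bot : AliasFree bot

/-- Plain constructor patterns. -/
inductive PlainPat : Pat S → Prop where
  | var (x : ℕ) : PlainPat (var x)
  | cons (c : S.C) (ps : Fin (S.ar c) → Pat S) :
      (∀ i, PlainPat (ps i)) → PlainPat (cons c ps)

/-- (Potentially aliased) constructor patterns. -/
inductive ConsAs : Pat S → Prop where
  | var (x : ℕ) : ConsAs (var x)
  | cons (c : S.C) (ps : Fin (S.ar c) → Pat S) :
      (∀ i, ConsAs (ps i)) → ConsAs (cons c ps)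
  | atp (x : ℕ) {q : Pat S} : ConsAs q → ConsAs (atp (var x) q)

end Pat

/-- One-hole contexts over patterns. -/
inductive PCtx (T : Sig) : Type where
  | hole : PCtx T
  | cons : (c : T.C) → (Fin (T.ar c) → Pat T) → Fin (T.ar c) → PCtx T → PCtx T
  | plusL : PCtx T → Pat T → PCtx T
  | plusR : Pat T → PCtx T → PCtx T
  | minusL : PCtx T → Pat T → PCtx T
  | minusR : Pat T → PCtx T → PCtx T
  | atpL : PCtx T → Pat T → PCtx T
  | atpR : Pat T → PCtx T → PCtx T

/-- Filling the hole of a context with a pattern. -/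
def PCtx.fill {T : Sig} : PCtx T → Pat T → Pat T
  | hole, t => t
  | cons c ps i K, t => Pat.cons c (Function.update ps i (fill K t))
  | plusL K q, t => Pat.plus (fill K t) q
  | plusR p K, t => Pat.plus p (fill K t)
  | minusL K q, t => Pat.minus (fill K t) q
  | minusR p K, t => Pat.minus p (fill K t)
  | atpL K q, t => Pat.atp (fill K t) q
  | atpR p K, t => Pat.atp p (fill K t)

/-- The signature `S` extended with an `N`-ary tuple symbol (`none`). -/
def SigT (S : Sig) (N : ℕ) : Sig :=
  ⟨Option S.C, fun o => o.elim N S.ar⟩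

instance (S : Sig) (N : ℕ) [Fintype S.C] : Fintype (SigT S N).C :=
  inferInstanceAs (Fintype (Option S.C))

/-- Embedding of values over `S` into values over the tuple-extended signature. -/
def Val.emb {S : Sig} {N : ℕ} : Val S → Val (SigT S N)
  | .mk c vs => .mk (some c) fun i => Val.emb (vs i)

/-- The tuple value `⟨v₁,…,v_N⟩`. -/
def vtup {S : Sig} {N : ℕ} (vs : Fin N → Val S) : Val (SigT S N) :=
  .mk none fun i => (vs i).emb

/-- A value seen as a pattern. -/
def Val.toPat {T : Sig} : Val T → Pat T
  | .mk c vs => .cons c fun i => Val.toPat (vs i)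

/-- The tuple pattern `⟨p₁,…,p_N⟩`. -/
def tup {S : Sig} {N : ℕ} (ps : Fin N → Pat (SigT S N)) : Pat (SigT S N) :=
  Pat.cons none ps

/-- Terms over the signature `S`, the variables, and a defined symbol `φ`
of arity `N`. -/
inductive Term (S : Sig) (N : ℕ) : Type where
  | var : ℕ → Term S N
  | cons : (c : S.C) → (Fin (S.ar c) → Term S N) → Term S N
  | phi : (Fin N → Term S N) → Term S N

/-- Ground terms over the signature `S` and the defined symbol `φ` of arity `N`. -/
inductive GTerm (S : Sig) (N : ℕ) : Type where
  | cons : (c : S.C) → (Fin (S.ar c) → GTerm S N) → GTerm S N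
  | phi : (Fin N → GTerm S N) → GTerm S N

/-- Variables of a term. -/
def Term.tvars {S : Sig} {N : ℕ} : Term S N → Set ℕ
  | var x => {x}
  | cons _ ts => ⋃ i, Term.tvars (ts i)
  | phi ts => ⋃ i, Term.tvars (ts i)

/-- Replacing the variable `x` by the term `u`. -/
def Term.substVar {S : Sig} {N : ℕ} (x : ℕ) (u : Term S N) : Term S N → Term S N
  | var y => if y = x then u else var y
  | cons c ts => cons c fun i => Term.substVar x u (ts i)
  | phi ts => phi fun i => Term.substVar x u (ts i)

/-- A value seen as a ground term. -/
def Val.toG {S : Sig} {N : ℕ} : Val S → GTerm S N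
  | .mk c vs => .cons c fun i => Val.toG (vs i)

/-- Applying a ground substitution to a term yields a ground term. -/
def Term.substG {S : Sig} {N : ℕ} (σ : ℕ → Val S) : Term S N → GTerm S N
  | var x => (σ x).toG
  | cons c ts => .cons c fun i => Term.substG σ (ts i)
  | phi ts => .phi fun i => Term.substG σ (ts i)

/-- An extended rewrite rule `φ(p₁,…,p_N) → r`: a tuple of extended as-patterns
together with a right-hand side term. -/
structure ERule (S : Sig) (N : ℕ) : Type where
  lhs : Fin N → Pat (SigT S N)
  rhs : Term S N

/-- Well-formedness of an extended rule: the left-hand side tuple is linear and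
contains no `⊥`, and the variables of the right-hand side are matchable
variables of the left-hand side. -/
def ERule.WF {S : Sig} {N : ℕ} (r : ERule S N) : Prop :=
  Pat.Linear (tup r.lhs) ∧ Term.tvars r.rhs ⊆ Pat.mvar (tup r.lhs) ∧
    ∀ i, Pat.BotFree (r.lhs i)

/-- The one-step rewrite relation induced by an ordered list `L` of extended
rules: at some position, the subterm is `φ(v̄)` with `v̄ ∈ ⟦σ(p̄ᵢ)⟧` for a
substitution `σ` of the matchable variables of the `i`-th rule, no earlier
rule's pattern matches `v̄`, and the subterm is replaced by `σ(rᵢ)`. -/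
inductive RewL {S : Sig} {N : ℕ} (L : List (ERule S N)) : GTerm S N → GTerm S N → Prop where
  | root (i : ℕ) (hi : i < L.length) (vs : Fin N → Val S) (σ : ℕ → Val S) :
      vtup vs ∈ Pat.sem (Pat.substOn (Pat.mvar (tup (L.get ⟨i, hi⟩).lhs))
        (fun x => ((σ x).emb : Val (SigT S N)).toPat) (tup (L.get ⟨i, hi⟩).lhs)) →
      (∀ j (hj : j < i),
        ¬ Pat.Matches (tup (L.get ⟨j, Nat.lt_trans hj hi⟩).lhs) (vtup vs)) →
      RewL L (GTerm.phi fun k => (vs k).toG) (Term.substG σ (L.get ⟨i, hi⟩).rhs)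
  | congCons (c : S.C) (ts : Fin (S.ar c) → GTerm S N) (k : Fin (S.ar c)) {t' : GTerm S N} :
      RewL L (ts k) t' → RewL L (GTerm.cons c ts) (GTerm.cons c (Function.update ts k t'))
  | congPhi (ts : Fin N → GTerm S N) (k : Fin N) {t' : GTerm S N} :
      RewL L (ts k) t' → RewL L (GTerm.phi ts) (GTerm.phi (Function.update ts k t'))

/-- The one-step rewrite relation induced by an (unordered) set `E` of extended
rules, given by the members of a list. -/
inductive RewS {S : Sig} {N : ℕ} (E : List (ERule S N)) : GTerm S N → GTerm S N → Prop where
  | root (r : ERule S N) (hr : r ∈ E) (vs : Fin N → Val S) (σ : ℕ → Val S) :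
      vtup vs ∈ Pat.sem (Pat.substOn (Pat.mvar (tup r.lhs))
        (fun x => ((σ x).emb : Val (SigT S N)).toPat) (tup r.lhs)) →
      RewS E (GTerm.phi fun k => (vs k).toG) (Term.substG σ r.rhs)
  | congCons (c : S.C) (ts : Fin (S.ar c) → GTerm S N) (k : Fin (S.ar c)) {t' : GTerm S N} :
      RewS E (ts k) t' → RewS E (GTerm.cons c ts) (GTerm.cons c (Function.update ts k t'))
  | congPhi (ts : Fin N → GTerm S N) (k : Fin N) {t' : GTerm S N} :
      RewS E (ts k) t' → RewS E (GTerm.phi ts) (GTerm.phi (Function.update ts k t'))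

variable {S : Sig} {N : ℕ}

/-- `RuleComp fv pat rhs cs`: the normal form of `pat` w.r.t. `R∖@` is either
`⊥` (and then `cs = []`) or a sum `q̄₁ + ⋯ + q̄ₘ` of `+`-free tuple patterns,
and `cs` is the list of the rules `φ(q̄ₖ) → rhs`. -/
def RuleComp [Fintype S.C] (fv : ℕ → ℕ) (pat : Pat (SigT S N)) (rhs : Term S N)
    (cs : List (ERule S N)) : Prop :=
  ∃ nf, Pat.NormalFormOf (Pat.Step fv) pat nf ∧
    ((nf = Pat.bot ∧ cs = []) ∨
     (∃ qs : List (Fin N → Pat (SigT S N)), Pat.summands nf = qs.map tup ∧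
        cs = qs.map fun q => ⟨q, rhs⟩))

/-- `L'` is obtained from `L` by the transformation `TRcomp`: each rule's
left-hand side is replaced by the summands of its `R∖@`-normal form (in order),
rules whose left-hand side normalizes to `⊥` being deleted. -/
def IsTRcomp [Fintype S.C] (fv : ℕ → ℕ) (L L' : List (ERule S N)) : Prop :=
  ∃ css : List (List (ERule S N)),
    List.Forall₂ (fun r cs => RuleComp fv (tup r.lhs) r.rhs cs) L css ∧
    L' = css.flatten

/-- The left-hand side of the `i`-th rule complemented w.r.t. the previous ones:
`p̄ᵢ ∖ (p̄₁ + ⋯ + p̄ᵢ₋₁)`. -/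
def ordLhs (L : List (ERule S N)) (i : ℕ) (hi : i < L.length) : Pat (SigT S N) :=
  match (L.take i).map fun r => tup r.lhs with
  | [] => tup (L.get ⟨i, hi⟩).lhs
  | p :: ps => Pat.minus (tup (L.get ⟨i, hi⟩).lhs) (Pat.sumList (p :: ps))

/-- `E` is obtained from the list `L` by the transformation `TRord`: it is the
(unordered) set of rules `φ(q̄ₖⁱ) → rᵢ` where `q̄₁ⁱ + ⋯ + q̄ₘⁱ` is the
`R∖@`-normal form of `p̄ᵢ ∖ (p̄₁ + ⋯ + p̄ᵢ₋₁)` (no rules when it is `⊥`). -/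
def IsTRord [Fintype S.C] (fv : ℕ → ℕ) (L E : List (ERule S N)) : Prop :=
  ∃ css : List (List (ERule S N)), ∃ hlen : css.length = L.length,
    (∀ r, r ∈ E ↔ ∃ cs ∈ css, r ∈ cs) ∧
    ∀ (i : ℕ) (hi : i < L.length),
      RuleComp fv (ordLhs L i hi) (L.get ⟨i, hi⟩).rhs (css.get ⟨i, by omega⟩)

/-- A (tuple-signature) pattern read back as a term over `S`. -/
inductive PatAsTerm : Pat (SigT S N) → Term S N → Prop where
  | var (x : ℕ) : PatAsTerm (Pat.var x) (Term.var x)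
  | cons (c : S.C) (ps : Fin (S.ar c) → Pat (SigT S N)) (ts : Fin (S.ar c) → Term S N) :
      (∀ i, PatAsTerm (ps i) (ts i)) → PatAsTerm (Pat.cons (some c) ps) (Term.cons c ts)

/-- One step of the transformation `TRat`: the rule `φ(p[x@q]_ω) → r` (with `q`
alias-free) is rewritten into `φ(p[q]_ω) → {x ↦ q} r`. -/
def TRatStep (r r' : ERule S N) : Prop :=
  ∃ (i : Fin N) (K : PCtx (SigT S N)) (x : ℕ) (q : Pat (SigT S N)) (qt : Term S N),
    Pat.AliasFree q ∧ PatAsTerm q qt ∧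
    r.lhs i = K.fill (Pat.atp (Pat.var x) q) ∧
    r'.lhs = Function.update r.lhs i (K.fill q) ∧
    r'.rhs = Term.substVar x qt r.rhs

/-- `r'` is the result of the transformation `TRat` on the rule `r`: aliases are
eliminated recursively until the left-hand side contains no alias symbol. -/
def IsTRat (r r' : ERule S N) : Prop :=
  Relation.ReflTransGen TRatStep r r' ∧ ∀ i, Pat.AliasFree (r'.lhs i)

/- ===================== Auxiliary development ===================== -/

namespace StmtAux
open Pat

variable {T : Sig}

/-- Contexts that can occur inside constructor-as patterns. -/
inductive GoodC : PCtx T → Prop where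
  | hole : GoodC PCtx.hole
  | cons (c : T.C) (ps : Fin (T.ar c) → Pat T) (i : Fin (T.ar c)) {K : PCtx T} :
      GoodC K → GoodC (PCtx.cons c ps i K)
  | atpR (x : ℕ) {K : PCtx T} : GoodC K → GoodC (PCtx.atpR (Pat.var x) K)

lemma fill_eq_var {K : PCtx T} {p : Pat T} {x : ℕ} (h : K.fill p = Pat.var x) :
    K = PCtx.hole ∧ p = Pat.var x := by
  cases K <;> simp [PCtx.fill] at h ⊢ <;> exact h

lemma goodC_of_consAs {p : Pat T} (hv : ∀ y, p ≠ Pat.var y) :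
    ∀ {K : PCtx T}, ConsAs (K.fill p) → GoodC K ∧ ConsAs p := by
  intro K
  induction K with
  | hole => intro h; exact ⟨GoodC.hole, h⟩
  | cons c ps i K ih =>
      intro h
      cases h with
      | cons _ _ hall =>
          have h2 := ih (by simpa using hall i)
          exact ⟨GoodC.cons _ _ _ h2.1, h2.2⟩
  | plusL K q ih => intro h; cases h
  | plusR q K ih => intro h; cases h
  | minusL K q ih => intro h; cases h
  | minusR q K ih => intro h; cases h
  | atpL K q ih =>
      intro h
      simp only [PCtx.fill] at h
      obtain ⟨y, hy⟩ : ∃ y, K.fill p = Pat.var y := by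
        generalize hA : K.fill p = A at h
        cases h with
        | atp x hq => exact ⟨x, rfl⟩
      exact absurd (fill_eq_var hy).2 (hv _)
  | atpR q K ih =>
      intro h
      cases h with
      | atp x hq =>
          have h2 := ih hq
          exact ⟨GoodC.atpR x h2.1, h2.2⟩

lemma consAs_fill {K : PCtx T} (hK : GoodC K) {p p' : Pat T}
    (h : ConsAs (K.fill p)) (h' : ConsAs p') : ConsAs (K.fill p') := by
  induction hK with
  | hole => exact h'
  | cons c ps i hK ih =>
      cases h with
      | cons _ _ hall =>
          refine ConsAs.cons c _ fun j => ?_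
          rcases eq_or_ne j i with rfl | hne
          · simpa using ih (by simpa using hall j)
          · simpa [Function.update_of_ne hne] using hall j
  | atpR x hK ih =>
      cases h with
      | atp _ hq => exact ConsAs.atp x (ih hq)

lemma vars_fill_mono {K : PCtx T} (hK : GoodC K) {p p' : Pat T}
    (h : vars p ⊆ vars p') : vars (K.fill p) ⊆ vars (K.fill p') := by
  induction hK with
  | hole => exact h
  | cons c ps i hK ih =>
      intro y hy
      simp only [PCtx.fill, vars, Set.mem_iUnion] at hy ⊢
      obtain ⟨j, hj⟩ := hy
      rcases eq_or_ne j i with rfl | hne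
      · exact ⟨j, by simpa using ih (by simpa using hj)⟩
      · exact ⟨j, by simpa [Function.update_of_ne hne] using hj⟩
  | atpR x hK ih =>
      intro y hy
      simp only [PCtx.fill, vars, Set.mem_union] at hy ⊢
      exact hy.imp id fun h' => ih h'

lemma vars_subset_fill {K : PCtx T} (hK : GoodC K) {p : Pat T} :
    vars p ⊆ vars (K.fill p) := by
  induction hK with
  | hole => exact subset_rfl
  | cons c ps i hK ih =>
      intro y hy
      simp only [PCtx.fill, vars, Set.mem_iUnion]
      exact ⟨i, by simpa using ih hy⟩
  | atpR x hK ih =>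
      intro y hy
      simp only [PCtx.fill, vars, Set.mem_union]
      exact Or.inr (ih hy)

lemma mvar_subset_fill {K : PCtx T} (hK : GoodC K) {p : Pat T} :
    mvar p ⊆ mvar (K.fill p) := by
  induction hK with
  | hole => exact subset_rfl
  | cons c ps i hK ih =>
      intro y hy
      simp only [PCtx.fill, mvar, Set.mem_iUnion]
      exact ⟨i, by simpa using ih hy⟩
  | atpR x hK ih =>
      intro y hy
      simp only [PCtx.fill, mvar, Set.mem_union]
      exact Or.inr (ih hy)

lemma vars_subset_mvar {p : Pat T} (h : ConsAs p) : vars p ⊆ mvar p := by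
  induction h with
  | var x => exact subset_rfl
  | cons c ps hall ih =>
      intro y hy
      simp only [vars, Set.mem_iUnion] at hy
      obtain ⟨j, hj⟩ := hy
      simp only [mvar, Set.mem_iUnion]
      exact ⟨j, ih j hj⟩
  | atp x hq ih =>
      intro y hy
      simp only [vars, Set.mem_union] at hy
      simp only [mvar, Set.mem_union]
      exact hy.imp (fun h' => by simpa [vars, mvar] using h') fun h' => ih h'

lemma substOn_congr {D D' : Set ℕ} {σ σ' : ℕ → Pat T} :
    ∀ {p : Pat T}, (∀ y ∈ vars p, (y ∈ D ↔ y ∈ D') ∧ σ y = σ' y) →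
      substOn D σ p = substOn D' σ' p := by
  intro p
  induction p with
  | var x =>
      intro h
      obtain ⟨hD, hσ⟩ := h x (by simp [vars])
      simp only [substOn]
      by_cases hx : x ∈ D
      · rw [if_pos hx, if_pos (hD.mp hx), hσ]
      · rw [if_neg hx, if_neg fun hx' => hx (hD.mpr hx')]
  | cons c ps ih =>
      intro h
      simp only [substOn]
      congr 1
      funext i
      exact ih i fun y hy => h y (by simp only [vars, Set.mem_iUnion]; exact ⟨i, hy⟩)
  | plus p q ihp ihq =>
      intro h
      simp only [substOn]
      rw [ihp fun y hy => h y (by simp only [vars, Set.mem_union]; exact Or.inl hy),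
        ihq fun y hy => h y (by simp only [vars, Set.mem_union]; exact Or.inr hy)]
  | minus p q ihp ihq =>
      intro h
      simp only [substOn]
      rw [ihp fun y hy => h y (by simp only [vars, Set.mem_union]; exact Or.inl hy),
        ihq fun y hy => h y (by simp only [vars, Set.mem_union]; exact Or.inr hy)]
  | bot => intro _; rfl
  | atp q p ihq ihp =>
      intro h
      simp only [substOn]
      rw [ihq fun y hy => h y (by simp only [vars, Set.mem_union]; exact Or.inl hy),
        ihp fun y hy => h y (by simp only [vars, Set.mem_union]; exact Or.inr hy)]

lemma mem_sem_toPat (v : Val T) : ∀ u, u ∈ sem (Val.toPat v) ↔ u = v := by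
  induction v with
  | mk c vs ih =>
      intro u
      simp only [Val.toPat, sem, Set.mem_setOf_eq]
      constructor
      · rintro ⟨us, rfl, hus⟩
        have : us = vs := funext fun i => (ih i (us i)).mp (hus i)
        rw [this]
      · rintro rfl
        exact ⟨vs, rfl, fun i => (ih i (vs i)).mpr rfl⟩

section EmbPart

variable {S : Sig} {N : ℕ}

/-- `v` is the embedding of a value over `S`. -/
def EmbL (v : Val (SigT S N)) : Prop := ∃ w : Val S, v = w.emb

lemma emb_inj : ∀ {v w : Val S}, (Val.emb v : Val (SigT S N)) = w.emb → v = w := by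
  intro v
  induction v with
  | mk c vs ih =>
      intro w h
      cases w with
      | mk d ws =>
          simp only [Val.emb] at h
          injection h with h1 h2
          obtain rfl : c = d := Option.some.inj h1
          have h3 : (fun i => Val.emb (vs i) : Fin (S.ar c) → Val (SigT S N)) =
              fun i => Val.emb (ws i) := eq_of_heq h2
          have : vs = ws := funext fun i => ih i (congrFun h3 i)
          rw [this]

lemma embL_mk {c : (SigT S N).C} {us : Fin ((SigT S N).ar c) → Val (SigT S N)}
    (h : EmbL (Val.mk c us)) : ∀ i, EmbL (us i) := by
  obtain ⟨⟨d, ws⟩, hw⟩ := h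
  simp only [Val.emb] at hw
  injection hw with h1 h2
  subst h1
  have h3 : us = fun i => Val.emb (ws i) := eq_of_heq h2
  intro i
  exact ⟨ws i, congrFun h3 i⟩

/-- The key decomposition lemma: membership in the semantics of a substituted
pattern `K[p]` decomposes into a value for the hole, functorially in `p`. -/
lemma sem_fill_extract {K : PCtx (SigT S N)} (hK : GoodC K) :
    ∀ {D : Set ℕ} {σ : ℕ → Pat (SigT S N)} {p : Pat (SigT S N)} {v : Val (SigT S N)},
      EmbL v → v ∈ sem (substOn D σ (K.fill p)) →
      ∃ u, EmbL u ∧ u ∈ sem (substOn D σ p) ∧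
        ∀ (D₂ : Set ℕ) (σ₂ : ℕ → Pat (SigT S N)) (p' : Pat (SigT S N)),
          (∀ y ∈ vars (K.fill Pat.bot), (y ∈ D ↔ y ∈ D₂) ∧ σ y = σ₂ y) →
          u ∈ sem (substOn D₂ σ₂ p') → v ∈ sem (substOn D₂ σ₂ (K.fill p')) := by
  induction hK with
  | hole => intro D σ p v hv h; exact ⟨v, hv, h, fun D₂ σ₂ p' _ h' => h'⟩
  | @cons c ps i K hK ih =>
      intro D σ p v hv h
      simp only [PCtx.fill, substOn, sem, Set.mem_setOf_eq] at h
      obtain ⟨us, rfl, hus⟩ := h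
      have hui : us i ∈ sem (substOn D σ (K.fill p)) := by simpa using hus i
      obtain ⟨u, hu1, hu2, hu3⟩ := ih (embL_mk hv i) hui
      refine ⟨u, hu1, hu2, fun D₂ σ₂ p' hag h' => ?_⟩
      have hagK : ∀ y ∈ vars (K.fill Pat.bot), (y ∈ D ↔ y ∈ D₂) ∧ σ y = σ₂ y := by
        intro y hy
        refine hag y ?_
        simp only [PCtx.fill, vars, Set.mem_iUnion]
        exact ⟨i, by simpa using hy⟩
      simp only [PCtx.fill, substOn, sem, Set.mem_setOf_eq]
      refine ⟨us, rfl, fun j => ?_⟩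
      rcases eq_or_ne j i with rfl | hne
      · simpa using hu3 D₂ σ₂ p' hagK h'
      · have hagj : ∀ y ∈ vars (ps j), (y ∈ D ↔ y ∈ D₂) ∧ σ y = σ₂ y := by
          intro y hy
          refine hag y ?_
          simp only [PCtx.fill, vars, Set.mem_iUnion]
          exact ⟨j, by simpa [Function.update_of_ne hne] using hy⟩
        have := hus j
        rw [Function.update_of_ne hne] at this ⊢
        rw [← StmtAux.substOn_congr hagj]
        exact this
  | @atpR x K hK ih =>
      intro D σ p v hv h
      simp only [PCtx.fill, substOn, sem, Set.mem_inter_iff] at h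
      obtain ⟨h1, h2⟩ := h
      obtain ⟨u, hu1, hu2, hu3⟩ := ih hv h2
      refine ⟨u, hu1, hu2, fun D₂ σ₂ p' hag h' => ?_⟩
      have hagx : ∀ y ∈ vars (Pat.var x : Pat (SigT S N)),
          (y ∈ D ↔ y ∈ D₂) ∧ σ y = σ₂ y := by
        intro y hy
        refine hag y ?_
        simp only [PCtx.fill, vars, Set.mem_union]
        exact Or.inl hy
      have hagK : ∀ y ∈ vars (K.fill Pat.bot), (y ∈ D ↔ y ∈ D₂) ∧ σ y = σ₂ y := by
        intro y hy
        refine hag y ?_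
        simp only [PCtx.fill, vars, Set.mem_union]
        exact Or.inr hy
      simp only [PCtx.fill, substOn, sem, Set.mem_inter_iff]
      refine ⟨?_, hu3 D₂ σ₂ p' hagK h'⟩
      obtain ⟨hDx, hσx⟩ := hagx x (by simp [vars])
      by_cases hx : x ∈ D
      · rw [if_pos hx] at h1
        rw [if_pos (hDx.mp hx), ← hσx]
        exact h1
      · rw [if_neg hx] at h1
        rw [if_neg fun hc => hx (hDx.mpr hc)]
        exact h1

lemma patAsTerm_eval {σ : ℕ → Val S} {q : Pat (SigT S N)} {qt : Term S N}
    (h : PatAsTerm q qt) :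
    ∀ {D : Set ℕ}, vars q ⊆ D →
      ∀ {w : Val S}, (Val.emb w : Val (SigT S N)) ∈
          sem (substOn D (fun y => Val.toPat ((σ y).emb : Val (SigT S N))) q) →
        Term.substG σ qt = Val.toG w := by
  induction h with
  | var x =>
      intro D hsub w hw
      have hx : x ∈ D := hsub (by simp [vars])
      simp only [substOn] at hw
      rw [if_pos hx] at hw
      have := (StmtAux.mem_sem_toPat _ _).mp hw
      have hwx : w = σ x := emb_inj this
      simp only [Term.substG, hwx]
  | cons c ps ts hall ih =>
      intro D hsub w hw
      simp only [substOn, sem, Set.mem_setOf_eq] at hw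
      obtain ⟨us, hemb, hus⟩ := hw
      cases w with
      | mk d ws =>
          simp only [Val.emb] at hemb
          injection hemb with h1 h2
          obtain rfl : d = c := Option.some.inj h1
          have h3 : (fun i => Val.emb (ws i) : Fin (S.ar d) → Val (SigT S N)) = us :=
            eq_of_heq h2
          simp only [Term.substG, Val.toG]
          congr 1
          funext i
          refine ih i (fun y hy => hsub ?_) ?_
          · simp only [vars, Set.mem_iUnion]; exact ⟨i, hy⟩
          · have h4 := hus i
            rw [← h3] at h4
            exact h4

lemma substG_substVar {σ : ℕ → Val S} {x : ℕ} {u : Term S N} {w : Val S}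
    (h : Term.substG σ u = Val.toG w) :
    ∀ t : Term S N, Term.substG σ (Term.substVar x u t) =
      Term.substG (Function.update σ x w) t := by
  intro t
  induction t with
  | var y =>
      simp only [Term.substVar]
      by_cases hy : y = x
      · subst hy
        rw [if_pos rfl, h]
        simp only [Term.substG, Function.update_self]
      · rw [if_neg hy]
        simp only [Term.substG, Function.update_of_ne hy]
  | cons c ts ih =>
      simp only [Term.substVar, Term.substG]
      congr 1
      funext i
      exact ih i
  | phi ts ih =>
      simp only [Term.substVar, Term.substG]
      congr 1
      funext i
      exact ih i

end EmbPart

section MatchLin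

variable {T : Sig}

lemma matches_fill_iff {K : PCtx T} (hK : GoodC K) {p p' : Pat T}
    (h : ∀ v, Matches p v ↔ Matches p' v) :
    ∀ v, Matches (K.fill p) v ↔ Matches (K.fill p') v := by
  induction hK with
  | hole => exact h
  | @cons c ps i K hK ih =>
      intro v
      simp only [PCtx.fill, Matches]
      constructor <;>
        · rintro ⟨us, rfl, hus⟩
          refine ⟨us, rfl, fun j => ?_⟩
          rcases eq_or_ne j i with rfl | hne
          · first
            | (simpa using (ih (us j)).mp (by simpa using hus j))
            | (simpa using (ih (us j)).mpr (by simpa using hus j))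
          · simpa [Function.update_of_ne hne] using hus j
  | @atpR x K hK ih =>
      intro v
      simp only [PCtx.fill, Matches]
      exact and_congr Iff.rfl (ih v)

lemma linear_fill_elim {K : PCtx T} (hK : GoodC K) :
    ∀ {p : Pat T}, Linear (K.fill p) → Linear p := by
  induction hK with
  | hole => exact fun h => h
  | @cons c ps i K hK ih =>
      intro p h
      cases h with
      | cons _ _ hall hdis => exact ih (by simpa using hall i)
  | @atpR x K hK ih =>
      intro p h
      cases h with
      | atp h1 h2 h3 => exact ih h2

lemma linear_fill_intro {K : PCtx T} (hK : GoodC K) :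
    ∀ {p p' : Pat T}, Linear (K.fill p) → Linear p' → vars p' ⊆ vars p →
      Linear (K.fill p') := by
  induction hK with
  | hole => exact fun _ h' _ => h'
  | @cons c ps i K hK ih =>
      intro p p' h h' hsub
      cases h with
      | cons _ _ hall hdis =>
          refine Linear.cons c _ (fun j => ?_) (fun j k hjk => ?_)
          · rcases eq_or_ne j i with rfl | hne
            · simpa using ih (by simpa using hall j) h' hsub
            · simpa [Function.update_of_ne hne] using hall j
          · have key : ∀ m, vars (Function.update ps i (K.fill p') m) ⊆
                vars (Function.update ps i (K.fill p) m) := by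
              intro m
              rcases eq_or_ne m i with rfl | hm
              · simpa using StmtAux.vars_fill_mono hK hsub
              · simp [Function.update_of_ne hm]
            exact ((hdis j k hjk).mono (key j) (key k))
  | @atpR x K hK ih =>
      intro p p' h h' hsub
      cases h with
      | atp h1 h2 h3 =>
          exact Linear.atp h1 (ih h2 h' hsub)
            (h3.mono_right (StmtAux.vars_fill_mono hK hsub))

lemma vars_fill_linear {K : PCtx T} (hK : GoodC K) :
    ∀ {p p' : Pat T} {y : ℕ}, Linear (K.fill p) → y ∈ vars p →
      y ∈ vars (K.fill p') → y ∈ vars p' := by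
  induction hK with
  | hole => exact fun _ _ h => h
  | @cons c ps i K hK ih =>
      intro p p' y hlin hy hy'
      cases hlin with
      | cons _ _ hall hdis =>
          simp only [PCtx.fill, vars, Set.mem_iUnion] at hy'
          obtain ⟨j, hj⟩ := hy'
          rcases eq_or_ne j i with rfl | hne
          · exact ih (by simpa using hall j) hy (by simpa using hj)
          · exfalso
            have hyi : y ∈ vars (Function.update ps i (K.fill p) i) := by
              simpa using StmtAux.vars_subset_fill hK hy
            have hyj : y ∈ vars (Function.update ps i (K.fill p) j) := by
              simpa [Function.update_of_ne hne] using hj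
            exact Set.disjoint_left.mp (hdis i j (Ne.symm hne)) hyi hyj
  | @atpR x K hK ih =>
      intro p p' y hlin hy hy'
      cases hlin with
      | atp h1 h2 h3 =>
          simp only [PCtx.fill, vars, Set.mem_union] at hy'
          rcases hy' with hy' | hy'
          · exfalso
            have : y ∈ vars (K.fill p) := StmtAux.vars_subset_fill hK hy
            exact Set.disjoint_right.mp h3 this hy'
          · exact ih h2 hy hy'

end MatchLin

section Main

variable {S : Sig} {N : ℕ}

/-- Invariant maintained by `TRatStep` on rules. -/
def Inv (r : ERule S N) : Prop := Pat.Linear (tup r.lhs) ∧ ∀ i, Pat.ConsAs (r.lhs i)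

/-- The two rules match the same value tuples. -/
def MEq (r r' : ERule S N) : Prop :=
  ∀ v, Pat.Matches (tup r.lhs) v ↔ Pat.Matches (tup r'.lhs) v

/-- The two rules produce the same root rewriting steps. -/
def SEq (r r' : ERule S N) : Prop :=
  ∀ (vs : Fin N → Val S) (t' : GTerm S N),
    (∃ σ : ℕ → Val S,
        vtup vs ∈ Pat.sem (Pat.substOn (Pat.mvar (tup r.lhs))
          (fun x => ((σ x).emb : Val (SigT S N)).toPat) (tup r.lhs)) ∧
        t' = Term.substG σ r.rhs) ↔
    (∃ σ : ℕ → Val S,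
        vtup vs ∈ Pat.sem (Pat.substOn (Pat.mvar (tup r'.lhs))
          (fun x => ((σ x).emb : Val (SigT S N)).toPat) (tup r'.lhs)) ∧
        t' = Term.substG σ r'.rhs)

lemma mem_sem_tup {rs : Fin N → Pat (SigT S N)} {vs : Fin N → Val S} :
    vtup vs ∈ sem (tup rs) ↔
      ∀ k, (Val.emb (vs k) : Val (SigT S N)) ∈ sem (rs k) := by
  simp only [tup, vtup, sem, Set.mem_setOf_eq]
  constructor
  · rintro ⟨us, h, hus⟩
    have h3 : (fun i => Val.emb (vs i) : Fin N → Val (SigT S N)) = us := by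
      injection h
    intro k
    have h4 := hus k
    rw [← h3] at h4
    exact h4
  · intro h
    exact ⟨fun i => (vs i).emb, rfl, h⟩

lemma mem_sem_tup_subst {D : Set ℕ} {σp : ℕ → Pat (SigT S N)} {rs : Fin N → Pat (SigT S N)}
    {vs : Fin N → Val S} :
    vtup vs ∈ sem (substOn D σp (tup rs)) ↔
      ∀ k, (Val.emb (vs k) : Val (SigT S N)) ∈ sem (substOn D σp (rs k)) := by
  have h : substOn D σp (tup rs) = tup (fun k => substOn D σp (rs k)) := by
    simp only [tup, substOn]
    rfl
  rw [h]
  exact mem_sem_tup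

lemma step_main {r r' : ERule S N} (hinv : Inv r) (hst : TRatStep r r') :
    Inv r' ∧ MEq r r' ∧ SEq r r' := by
  obtain ⟨i, K, x, q, qt, hqa, hqt, hlhs, hlhs', hrhs'⟩ := hst
  have hca_i : Pat.ConsAs (K.fill (Pat.atp (Pat.var x) q)) := by
    have := hinv.2 i; rw [hlhs] at this; exact this
  obtain ⟨hK, hcaxq⟩ := goodC_of_consAs (p := Pat.atp (Pat.var x) q)
      (fun y h => by cases h) hca_i
  have hcaq : Pat.ConsAs q := by cases hcaxq with | atp _ hq => exact hq
  have hlin := hinv.1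
  rw [show tup r.lhs = Pat.cons none r.lhs from rfl] at hlin
  obtain ⟨hlinargs, hdisj⟩ : (∀ j, Pat.Linear (r.lhs j)) ∧
      (∀ j k, j ≠ k → Disjoint (Pat.vars (r.lhs j)) (Pat.vars (r.lhs k))) := by
    cases hlin with | cons _ _ h1 h2 => exact ⟨h1, h2⟩
  have hlin_i : Pat.Linear (K.fill (Pat.atp (Pat.var x) q)) := by
    have := hlinargs i; rw [hlhs] at this; exact this
  have hlinxq : Pat.Linear (Pat.atp (Pat.var x) q) := linear_fill_elim hK hlin_i
  obtain ⟨hlinq, hdisxq⟩ : Pat.Linear q ∧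
      Disjoint (Pat.vars (Pat.var x : Pat (SigT S N))) (Pat.vars q) := by
    cases hlinxq with | atp h1 h2 h3 => exact ⟨h2, h3⟩
  have hxq : x ∉ Pat.vars q := fun h =>
    Set.disjoint_left.mp hdisxq (by simp [Pat.vars]) h
  have hx_hole : x ∈ Pat.vars (Pat.atp (Pat.var x) q) := by
    simp [Pat.vars]
  have hvars_q_sub : Pat.vars q ⊆ Pat.vars (Pat.atp (Pat.var x) q) := by
    intro y hy; simp only [Pat.vars, Set.mem_union]; exact Or.inr hy
  have hfill_sub : Pat.vars (K.fill q) ⊆ Pat.vars (K.fill (Pat.atp (Pat.var x) q)) :=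
    vars_fill_mono hK hvars_q_sub
  have hx_not_fill : x ∉ Pat.vars (K.fill q) := fun h =>
    hxq (vars_fill_linear hK hlin_i hx_hole h)
  have hx_i : x ∈ Pat.vars (r.lhs i) := by
    rw [hlhs]; exact vars_subset_fill hK hx_hole
  have hx_not_j : ∀ j, j ≠ i → x ∉ Pat.vars (r.lhs j) := fun j hj h =>
    Set.disjoint_left.mp (hdisj i j fun he => hj he.symm) hx_i h
  have hkey : ∀ j, Pat.vars (r'.lhs j) ⊆ Pat.vars (r.lhs j) := by
    intro j
    rw [hlhs']
    rcases eq_or_ne j i with rfl | hj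
    · rw [Function.update_self, hlhs]; exact hfill_sub
    · rw [Function.update_of_ne hj]
  have hca' : ∀ j, Pat.ConsAs (r'.lhs j) := by
    intro j
    rw [hlhs']
    rcases eq_or_ne j i with rfl | hj
    · rw [Function.update_self]; exact consAs_fill hK hca_i hcaq
    · rw [Function.update_of_ne hj]; exact hinv.2 j
  have hlin' : Pat.Linear (tup r'.lhs) := by
    rw [show tup r'.lhs = Pat.cons none r'.lhs from rfl]
    refine Pat.Linear.cons _ _ (fun (j : Fin N) => ?_)
      (fun j k hjk => (hdisj j k hjk).mono (hkey j) (hkey k))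
    rw [hlhs']
    rcases eq_or_ne j i with rfl | hj
    · rw [Function.update_self]
      exact linear_fill_intro hK hlin_i hlinq hvars_q_sub
    · rw [Function.update_of_ne hj]; exact hlinargs j
  have hinv' : Inv r' := ⟨hlin', hca'⟩
  -- matching equivalence
  have hcomp : ∀ j v', Pat.Matches (r'.lhs j) v' ↔ Pat.Matches (r.lhs j) v' := by
    intro j v'
    rw [hlhs']
    rcases eq_or_ne j i with rfl | hj
    · rw [Function.update_self, hlhs]
      exact (matches_fill_iff hK (fun v => by simp [Pat.Matches]) v').symm
    · rw [Function.update_of_ne hj]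
  have hMEq : MEq r r' := by
    intro v
    simp only [tup, Pat.Matches]
    constructor
    · rintro ⟨us, rfl, h⟩; exact ⟨us, rfl, fun j => (hcomp j _).mpr (h j)⟩
    · rintro ⟨us, rfl, h⟩; exact ⟨us, rfl, fun j => (hcomp j _).mp (h j)⟩
  -- semantic equivalence
  have hmvD : ∀ j, Pat.vars (r.lhs j) ⊆ Pat.mvar (tup r.lhs) := by
    intro j y hy
    simp only [tup, Pat.mvar, Set.mem_iUnion]
    exact ⟨j, vars_subset_mvar (hinv.2 j) hy⟩
  have hmvD' : ∀ j, Pat.vars (r'.lhs j) ⊆ Pat.mvar (tup r'.lhs) := by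
    intro j y hy
    simp only [tup, Pat.mvar, Set.mem_iUnion]
    exact ⟨j, vars_subset_mvar (hca' j) hy⟩
  have hx_D : x ∈ Pat.mvar (tup r.lhs) := hmvD i hx_i
  have hq_D : Pat.vars q ⊆ Pat.mvar (tup r.lhs) := fun y hy =>
    hmvD i (by rw [hlhs]; exact vars_subset_fill hK (hvars_q_sub hy))
  have hfq_D : Pat.vars (K.fill q) ⊆ Pat.mvar (tup r.lhs) := fun y hy =>
    hmvD i (by rw [hlhs]; exact hfill_sub hy)
  have hfq_D' : Pat.vars (K.fill q) ⊆ Pat.mvar (tup r'.lhs) := fun y hy =>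
    hmvD' i (by rw [hlhs', Function.update_self]; exact hy)
  have hq_D' : Pat.vars q ⊆ Pat.mvar (tup r'.lhs) := fun y hy =>
    hfq_D' (vars_subset_fill hK hy)
  have hj_D' : ∀ j, j ≠ i → Pat.vars (r.lhs j) ⊆ Pat.mvar (tup r'.lhs) := fun j hj y hy =>
    hmvD' j (by rw [hlhs', Function.update_of_ne hj]; exact hy)
  have hbot_fill : Pat.vars (K.fill Pat.bot) ⊆ Pat.vars (K.fill q) :=
    vars_fill_mono hK (by intro y hy; simp [Pat.vars] at hy)
  have heqi : r'.lhs i = K.fill q := by rw [hlhs', Function.update_self]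
  have heqk : ∀ k, k ≠ i → r'.lhs k = r.lhs k := fun k hk => by
    rw [hlhs', Function.update_of_ne hk]
  have hSEq : SEq r r' := by
    intro vs t'
    constructor
    · rintro ⟨σ, hmem, rfl⟩
      have hcomp1 := mem_sem_tup_subst.mp hmem
      have hhi := hcomp1 i
      rw [hlhs] at hhi
      obtain ⟨u, hu1, hu2, hu3⟩ := sem_fill_extract hK ⟨vs i, rfl⟩ hhi
      have hu2' : u ∈ sem (if x ∈ Pat.mvar (tup r.lhs)
            then ((σ x).emb : Val (SigT S N)).toPat else Pat.var x) ∧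
          u ∈ sem (substOn (Pat.mvar (tup r.lhs))
            (fun y => ((σ y).emb : Val (SigT S N)).toPat) q) := by
        simpa only [substOn, sem, Set.mem_inter_iff] using hu2
      have hux : u = (σ x).emb := by
        have h1 := hu2'.1
        rw [if_pos hx_D] at h1
        exact (mem_sem_toPat _ _).mp h1
      have hqmem : ((σ x).emb : Val (SigT S N)) ∈ sem (substOn (Pat.mvar (tup r.lhs))
          (fun y => ((σ y).emb : Val (SigT S N)).toPat) q) := hux ▸ hu2'.2
      have hqt_eval : Term.substG σ qt = (σ x).toG := patAsTerm_eval hqt hq_D hqmem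
      refine ⟨σ, ?_, ?_⟩
      · refine mem_sem_tup_subst.mpr fun k => ?_
        rcases eq_or_ne k i with rfl | hk
        · rw [heqi]
          refine hu3 _ _ q (fun y hy => ⟨iff_of_true (hfq_D (hbot_fill hy))
            (hfq_D' (hbot_fill hy)), rfl⟩) ?_
          rw [← substOn_congr fun y hy => ⟨iff_of_true (hq_D hy) (hq_D' hy), rfl⟩]
          exact hu2'.2
        · rw [heqk k hk,
            ← substOn_congr fun y hy => ⟨iff_of_true (hmvD k hy) (hj_D' k hk hy), rfl⟩]
          exact hcomp1 k
      · rw [hrhs', substG_substVar hqt_eval, Function.update_eq_self]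
    · rintro ⟨σ', hmem, rfl⟩
      have hcomp1 := mem_sem_tup_subst.mp hmem
      have hhi := hcomp1 i
      rw [heqi,
        substOn_congr fun y hy => ⟨iff_of_true (hfq_D' hy) (hfq_D hy),
          (rfl : ((σ' y).emb : Val (SigT S N)).toPat = _)⟩] at hhi
      obtain ⟨u, hu1, hu2, hu3⟩ := sem_fill_extract hK ⟨vs i, rfl⟩ hhi
      obtain ⟨w, rfl⟩ := hu1
      have hqmem' : (Val.emb w : Val (SigT S N)) ∈ sem (substOn (Pat.mvar (tup r'.lhs))
          (fun y => ((σ' y).emb : Val (SigT S N)).toPat) q) := by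
        rw [substOn_congr fun y hy => ⟨iff_of_true (hq_D' hy) (hq_D hy),
          (rfl : ((σ' y).emb : Val (SigT S N)).toPat = _)⟩]
        exact hu2
      have hqt_eval : Term.substG σ' qt = w.toG := patAsTerm_eval hqt hq_D' hqmem'
      refine ⟨Function.update σ' x w, ?_, ?_⟩
      · refine mem_sem_tup_subst.mpr fun k => ?_
        rcases eq_or_ne k i with rfl | hk
        · rw [hlhs]
          refine hu3 _ _ (Pat.atp (Pat.var x) q) ?_ ?_
          · intro y hy
            have hyx : y ≠ x := fun he => hx_not_fill (he ▸ hbot_fill hy)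
            exact ⟨Iff.rfl, by rw [Function.update_of_ne hyx]⟩
          · show Val.emb w ∈ sem (substOn (Pat.mvar (tup r.lhs))
              (fun y => (((Function.update σ' x w) y).emb : Val (SigT S N)).toPat)
              (Pat.atp (Pat.var x) q))
            simp only [substOn, sem, Set.mem_inter_iff]
            constructor
            · rw [if_pos hx_D, Function.update_self]
              exact (mem_sem_toPat _ _).mpr rfl
            · rw [← substOn_congr fun y hy => ⟨Iff.rfl,
                by rw [Function.update_of_ne fun (he : y = x) => hxq (he ▸ hy)]⟩]
              exact hu2
        · have h0 := hcomp1 k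
          rw [heqk k hk] at h0
          rw [substOn_congr fun y hy => ⟨iff_of_true (hmvD k hy) (hj_D' k hk hy),
            by rw [Function.update_of_ne fun (he : y = x) => hx_not_j k hk (he ▸ hy)]⟩]
          exact h0
      · rw [hrhs', substG_substVar hqt_eval]
  exact ⟨hinv', hMEq, hSEq⟩

lemma trat_equiv {r r' : ERule S N} (hinv : Inv r)
    (h : Relation.ReflTransGen TRatStep r r') : Inv r' ∧ MEq r r' ∧ SEq r r' := by
  induction h with
  | refl => exact ⟨hinv, fun v => Iff.rfl, fun vs t' => Iff.rfl⟩
  | tail hab hbc ih =>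
      obtain ⟨h1, h2, h3⟩ := ih
      obtain ⟨g1, g2, g3⟩ := step_main h1 hbc
      exact ⟨g1, fun v => (h2 v).trans (g2 v), fun vs t' => (h3 vs t').trans (g3 vs t')⟩

lemma rewl_mono {L L' : List (ERule S N)} (hlen : L.length = L'.length)
    (hM : ∀ (i : ℕ) (hi : i < L.length) (hi' : i < L'.length),
      MEq (L.get ⟨i, hi⟩) (L'.get ⟨i, hi'⟩))
    (hS : ∀ (i : ℕ) (hi : i < L.length) (hi' : i < L'.length),
      SEq (L.get ⟨i, hi⟩) (L'.get ⟨i, hi'⟩))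
    {t t' : GTerm S N} (h : RewL L t t') : RewL L' t t' := by
  induction h with
  | root i hi vs σ hmem hprev =>
      have hi' : i < L'.length := hlen ▸ hi
      obtain ⟨σ', hmem', heq⟩ := (hS i hi hi' vs (Term.substG σ (L.get ⟨i, hi⟩).rhs)).mp
        ⟨σ, hmem, rfl⟩
      rw [heq]
      exact RewL.root i hi' vs σ' hmem' fun j hj hm =>
        hprev j hj ((hM j (Nat.lt_trans hj hi) (Nat.lt_trans hj hi') _).mpr hm)
  | congCons c ts k h ih => exact RewL.congCons c ts k ih
  | congPhi ts k h ih => exact RewL.congPhi ts k ih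

end Main

end StmtAux

/-- Alias encoding: for a list `L` of rules whose left-hand
sides use only (potentially aliased) constructor patterns, the alias-eliminating
transformation `TRat` preserves the one-step rewrite relation. -/
theorem stmt15 (S : Sig) [Fintype S.C] (N : ℕ)
    (L L' : List (ERule S N)) (hwf : ∀ r ∈ L, r.WF)
    (hcons : ∀ r ∈ L, ∀ i, Pat.ConsAs (r.lhs i))
    (htr : List.Forall₂ IsTRat L L') (t t' : GTerm S N) :
    RewL L t t' ↔ RewL L' t t' := by
  obtain ⟨hlen, hget⟩ := List.forall₂_iff_get.mp htr
  have hinv : ∀ (i : ℕ) (hi : i < L.length), StmtAux.Inv (L.get ⟨i, hi⟩) := fun i hi =>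
    ⟨(hwf _ (List.get_mem L ⟨i, hi⟩)).1, hcons _ (List.get_mem L ⟨i, hi⟩)⟩
  have key : ∀ (i : ℕ) (hi : i < L.length) (hi' : i < L'.length),
      StmtAux.MEq (L.get ⟨i, hi⟩) (L'.get ⟨i, hi'⟩) ∧
        StmtAux.SEq (L.get ⟨i, hi⟩) (L'.get ⟨i, hi'⟩) := by
    intro i hi hi'
    obtain ⟨_, h2, h3⟩ := StmtAux.trat_equiv (hinv i hi) (hget i hi hi').1
    exact ⟨h2, h3⟩
  constructor
  · exact StmtAux.rewl_mono hlen (fun i hi hi' => (key i hi hi').1)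
      (fun i hi hi' => (key i hi hi').2)
  · exact StmtAux.rewl_mono hlen.symm
      (fun i hi hi' => fun v => ((key i hi' hi).1 v).symm)
      (fun i hi hi' => fun vs t'' => ((key i hi' hi).2 vs t'').symm)
end
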